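/- arXiv:1905.03370 — 5 statements merged into one kernel-verified Lean document; each statement's English description precedes it below -/
import Mathlib

section
/- Let p > 2 be a prime. If (m₁, m₂, m₃) is a triple of integers in {0,...,p-1} with m₁ + m₂ + m₃ ≡ 1 (mod p), and the triple (m₁^μ, m₂^μ, m₃^μ) satisfies the inequalities |m₂^μ - m₃^μ| ≤ m₁^μ ≤ m₂^μ + m₃^μ and m₁^μ + m₂^μ + m₃^μ ≤ p - 2, then each mᵢ ≥ 1 and m₁ + m₂ + m₃ = p + 1. -/
def mu (p m : ℕ) : ℕ := if m % 2 = 0 then (p - m - 1) / 2 else (m - 1) / 2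

set_option maxHeartbeats 1000000 in
theorem stmt_2 (p : ℕ) (hp : p.Prime) (hp2 : 2 < p) (m₁ m₂ m₃ : ℕ)
    (h₁ : m₁ ≤ p - 1) (h₂ : m₂ ≤ p - 1) (h₃ : m₃ ≤ p - 1)
    (hsum : (m₁ + m₂ + m₃) % p = 1 % p)
    (htri₁ : mu p m₂ ≤ mu p m₁ + mu p m₃)
    (htri₂ : mu p m₃ ≤ mu p m₁ + mu p m₂)
    (htri₃ : mu p m₁ ≤ mu p m₂ + mu p m₃)
    (hbd : mu p m₁ + mu p m₂ + mu p m₃ ≤ p - 2) :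
    1 ≤ m₁ ∧ 1 ≤ m₂ ∧ 1 ≤ m₃ ∧ m₁ + m₂ + m₃ = p + 1 := by
  have hpodd : p % 2 = 1 := by
    rcases hp.eq_two_or_odd with h | h
    · omega
    · exact h
  have hp1 : 1 % p = 1 := Nat.one_mod_eq_one.mpr (by omega)
  rw [hp1] at hsum
  set s := m₁ + m₂ + m₃ with hs
  have hd := Nat.div_add_mod s p
  have hslt : s ≤ 3 * p - 3 := by omega
  obtain ⟨k, hk⟩ : ∃ k, s = p * k + 1 := ⟨s / p, by omega⟩
  have hk2 : k ≤ 2 := by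
    by_contra h
    have h3 : p * 3 ≤ p * k := Nat.mul_le_mul_left p (by omega)
    omega
  have hcase : s = 1 ∨ s = p + 1 ∨ s = 2 * p + 1 := by
    interval_cases k <;> omega
  simp only [mu] at htri₁ htri₂ htri₃ hbd
  rcases Nat.mod_two_eq_zero_or_one m₁ with e1 | e1 <;>
  rcases Nat.mod_two_eq_zero_or_one m₂ with e2 | e2 <;>
  rcases Nat.mod_two_eq_zero_or_one m₃ with e3 | e3 <;>
  simp only [e1, e2, e3, Nat.one_ne_zero, if_true, if_false, ite_true, ite_false] at htri₁ htri₂ htri₃ hbd <;>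
  rcases hcase with h | h | h <;>
  omega
end

section
/- Let p > 2 be a prime and (m₁, m₂, m₃) a triple of positive integers with m₁ + m₂ + m₃ = p + 1 and each mᵢ ≤ p - 1. Then the triple (m₁^μ, m₂^μ, m₃^μ) satisfies the triangle inequalities |m₂^μ - m₃^μ| ≤ m₁^μ ≤ m₂^μ + m₃^μ and the bound m₁^μ + m₂^μ + m₃^μ ≤ p - 2. -/
theorem stmt_3 (p : ℕ) (hp : p.Prime) (hp2 : 2 < p) (m₁ m₂ m₃ : ℕ)
    (h₁ : 0 < m₁) (h₂ : 0 < m₂) (h₃ : 0 < m₃)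
    (h₁' : m₁ ≤ p - 1) (h₂' : m₂ ≤ p - 1) (h₃' : m₃ ≤ p - 1)
    (hsum : m₁ + m₂ + m₃ = p + 1) :
    mu p m₂ ≤ mu p m₁ + mu p m₃ ∧
    mu p m₃ ≤ mu p m₁ + mu p m₂ ∧
    mu p m₁ ≤ mu p m₂ + mu p m₃ ∧
    mu p m₁ + mu p m₂ + mu p m₃ ≤ p - 2 := by
  have hodd : p % 2 = 1 := (Nat.Prime.eq_two_or_odd hp).resolve_left (by omega)
  simp only [mu]
  split_ifs <;> omega
end

section
/- Let p > 2 be a prime and G a finite connected 3-regular graph (every vertex incident to exactly 3 half-edges, all edges internal). Suppose given an assignment m of values in {1,...,p-1} to half-edges such that opposite half-edges b, b* of each edge satisfy m(b*) = p - m(b), and at each vertex the three incident half-edge values sum to p + 1. If (b_j)_{j=1}^l is a reduced closed walk (b_j ≠ b_{j-1}* for all j, indices cyclic) and b_j^c denotes the third half-edge at the vertex of b_j (besides b_j and b_{j-1}*), then m(b_j^c) = 1 for all j. -/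
/-- Along a reduced closed walk in a 3-regular graph carrying a strict `p`-branch
numbering, the "third" branch at each visited vertex has value `1`. -/
theorem stmt_9 (p : ℕ) (hp : p.Prime) (hp2 : 2 < p)
    (B V : Type) (star : B → B) (vert : B → V)
    (hinv : ∀ b, star (star b) = b)
    (m : B → ℕ)
    (hm1 : ∀ b, 1 ≤ m b) (hm2 : ∀ b, m b ≤ p - 1)
    (hstar : ∀ b, m (star b) = p - m b)
    (l : ℕ) (hl : 0 < l) (b bc : ZMod l → B)
    -- the walk is closed and consecutive: the endpoint of the `j`-th branch is
    -- the starting vertex of the `(j+1)`-st branch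
    (hstep : ∀ j, vert (star (b j)) = vert (b (j + 1)))
    -- the walk is reduced (no backtracking)
    (hred : ∀ j, b (j + 1) ≠ star (b j))
    -- at the vertex of `b j`, the three incident branches are
    -- `b j`, `star (b (j-1))` and `bc j`, and they are pairwise distinct
    (hvert : ∀ j, vert (bc j) = vert (b j) ∧ bc j ≠ b j ∧ bc j ≠ star (b (j - 1)))
    -- strict numbering condition at each visited vertex
    (hsum : ∀ j, m (b j) + m (star (b (j - 1))) + m (bc j) = p + 1) :
    ∀ j, m (bc j) = 1 := by
  haveI : NeZero l := ⟨hl.ne'⟩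
  have key : ∀ j : ZMod l, (m (bc j) : ℤ) = 1 + m (b (j - 1)) - m (b j) := by
    intro j
    have h1 : m (b (j - 1)) ≤ p := le_trans (hm2 _) (Nat.sub_le _ _)
    have hs := hsum j
    rw [hstar (b (j - 1))] at hs
    have hz : (m (b j) : ℤ) + ((p : ℤ) - m (b (j - 1))) + m (bc j) = p + 1 := by
      have := congrArg (Nat.cast : ℕ → ℤ) hs
      push_cast [Nat.cast_sub h1] at this
      linarith
    linarith
  have hge : ∀ j : ZMod l, (m (b j) : ℤ) ≤ m (b (j - 1)) := by
    intro j
    have h1 : (1 : ℤ) ≤ m (bc j) := by exact_mod_cast hm1 (bc j)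
    linarith [key j]
  have hsumeq : ∑ j : ZMod l, (m (b (j - 1)) : ℤ) = ∑ j : ZMod l, (m (b j) : ℤ) :=
    Fintype.sum_equiv (Equiv.subRight (1 : ZMod l)) _ _ (fun j => rfl)
  have heq : ∀ j : ZMod l, (m (b j) : ℤ) = m (b (j - 1)) := by
    have h := (Finset.sum_eq_sum_iff_of_le (fun i _ => hge i)).mp hsumeq.symm
    intro j
    exact h j (Finset.mem_univ j)
  intro j
  have : (m (bc j) : ℤ) = 1 := by linarith [key j, heq j]
  exact_mod_cast this
end

section
/- Let p > 2 be a prime and Γ a finite connected 3-regular graph (possibly with external edges) whose first Betti number is 1. Then the number of strict p-branch numberings on Γ is exactly p - 1, and each one assigns the value p - 1 to every external branch at a vertex. -/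
open Finset

section Aux
variable {B V : Type} [Fintype B] [Fintype V] [DecidableEq B] [DecidableEq V]

lemma card_B_eq (vert : B → Option V)
    (hreg : ∀ v : V, (univ.filter (fun b => vert b = some v)).card = 3) :
    Fintype.card B = 3 * Fintype.card V + (univ.filter (fun b => vert b = none)).card := by
  have h := Finset.card_eq_sum_card_fiberwise
    (f := vert) (s := (univ : Finset B)) (t := (univ : Finset (Option V)))
    (fun x _ => mem_univ _)
  rw [Fintype.sum_option] at h
  simp only [hreg, Finset.sum_const, smul_eq_mul] at h
  rw [Fintype.card, Fintype.card, h]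
  have : #(univ : Finset V) = Fintype.card V := Finset.card_univ
  omega

lemma sum_B_eq (vert : B → Option V) (m : B → ℕ) :
    (∑ b, m b) = (∑ b ∈ univ.filter (fun b => vert b = none), m b)
      + ∑ v : V, ∑ b ∈ univ.filter (fun b => vert b = some v), m b := by
  have h := Finset.sum_fiberwise_of_maps_to
    (g := vert) (s := (univ : Finset B)) (t := (univ : Finset (Option V)))
    (fun x _ => mem_univ _) m
  rw [Fintype.sum_option] at h
  rw [← h]

lemma part2_main {p : ℕ} (hp2 : 2 < p) (star : B → B) (vert : B → Option V)
    (hinv : ∀ b, star (star b) = b)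
    (hreg : ∀ v : V, (univ.filter (fun b => vert b = some v)).card = 3)
    (hbetti : Fintype.card B =
      2 * Fintype.card V + 2 * (univ.filter (fun b => vert b = none)).card)
    (m : B → ℕ)
    (hub : ∀ b, m b ≤ p - 1) (hpair : ∀ b, m b + m (star b) = p)
    (hsum : ∀ v : V, ∑ b ∈ univ.filter (fun b => vert b = some v), m b = p + 1) :
    ∀ b, vert b = none → m b = p - 1 ∧ m (star b) = 1 := by
  set r := (univ.filter (fun b => vert b = none)).card with hr
  set N := Fintype.card V with hN
  have hcard : Fintype.card B = 3 * N + r := card_B_eq vert hreg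
  have hrN : r = N := by omega
  have hbij : Function.Bijective star :=
    (Function.Involutive.toPerm star hinv).bijective
  have h2 : 2 * ∑ b, m b = Fintype.card B * p := by
    have e1 : ∑ b, (m b + m (star b)) = ∑ _b : B, p := by
      apply Finset.sum_congr rfl; intro b _; exact hpair b
    have e2 : ∑ b, m (star b) = ∑ b, m b :=
      Fintype.sum_bijective star hbij _ _ (fun x => rfl)
    rw [Finset.sum_add_distrib, e2, Finset.sum_const, smul_eq_mul,
      Finset.card_univ] at e1
    omega
  have h3 : (∑ b, m b) = (∑ b ∈ univ.filter (fun b => vert b = none), m b)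
      + N * (p+1) := by
    rw [sum_B_eq vert m]
    congr 1
    calc ∑ v : V, ∑ b ∈ univ.filter (fun b => vert b = some v), m b
        = ∑ _v : V, (p+1) := by
          apply Finset.sum_congr rfl; intro v _; exact hsum v
      _ = N * (p+1) := by
          rw [Finset.sum_const, smul_eq_mul, Finset.card_univ]
  -- free sum equals N * (p-1)
  have hfree : (∑ b ∈ univ.filter (fun b => vert b = none), m b) = N * (p - 1) := by
    have hp1 : 1 ≤ p := by omega
    rw [hcard, hrN] at h2
    zify [hp1] at h2 h3 ⊢
    linarith
  -- pointwise
  have hpt : ∀ b ∈ univ.filter (fun b => vert b = none), m b = p - 1 := by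
    by_contra hc
    push_neg at hc
    obtain ⟨b0, hb0, hb0'⟩ := hc
    have hlt : (∑ b ∈ univ.filter (fun b => vert b = none), m b)
        < ∑ b ∈ univ.filter (fun b => vert b = none), (p - 1) := by
      apply Finset.sum_lt_sum (fun i _ => hub i)
      exact ⟨b0, hb0, lt_of_le_of_ne (hub b0) hb0'⟩
    rw [Finset.sum_const, smul_eq_mul] at hlt
    rw [show #(filter (fun b => vert b = none) univ) = N from hrN ▸ hr.symm ▸ rfl] at hlt
    omega
  intro b hb
  have h1 : m b = p - 1 := hpt b (by simp [hb])
  refine ⟨h1, ?_⟩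
  have := hpair b
  omega


variable {B V : Type} [Fintype B] [Fintype V] [DecidableEq B] [DecidableEq V]

lemma caseB {p : ℕ} (hp2 : 2 < p) (star : B → B) (vert : B → Option V)
    (hinv : ∀ b, star (star b) = b) (hnf : ∀ b, star b ≠ b)
    (hreg : ∀ v : V, (univ.filter (fun b => vert b = some v)).card = 3)
    (hext : ∀ b, vert b = none → ∃ v, vert (star b) = some v)
    (hconn : ∀ u v : V, Relation.ReflTransGen
      (fun x y => ∃ b, vert b = some x ∧ vert (star b) = some y) u v)
    (hV : Nonempty V)
    (hbetti : Fintype.card B =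
      2 * Fintype.card V + 2 * (univ.filter (fun b => vert b = none)).card)
    (hk : ∀ v : V, (univ.filter (fun b => vert b = some v ∧ vert (star b) = none)).card = 1) :
    ({ m : B → ℕ |
        (∀ b, 1 ≤ m b) ∧ (∀ b, m b ≤ p - 1) ∧ (∀ b, m b + m (star b) = p) ∧
        (∀ v : V, ∑ b ∈ Finset.univ.filter (fun b => vert b = some v), m b = p + 1) }).ncard
      = p - 1 := by
  classical
  -- the two internal branches at each vertex
  have hIv : ∀ v : V, (univ.filter (fun b => vert b = some v ∧ vert (star b) ≠ none)).card = 2 := by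
    intro v
    have h3 := hreg v
    have hsplit := Finset.card_filter_add_card_filter_not
      (s := univ.filter (fun b => vert b = some v)) (p := fun b => vert (star b) = none)
    rw [Finset.filter_filter, Finset.filter_filter, h3] at hsplit
    have hk1 := hk v
    simp only [ne_eq]
    omega
  -- the sigma function: unique other internal branch at the vertex of `star b`
  have hsig0 : ∀ b : B, ∃ c : B, (vert (star b) ≠ none ∧ vert b ≠ none) →
      vert c = vert (star b) ∧ vert (star c) ≠ none ∧ c ≠ star b ∧
      (∀ c', vert c' = vert (star b) → vert (star c') ≠ none → c' ≠ star b → c' = c) := by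
    intro b
    by_cases h : vert (star b) ≠ none ∧ vert b ≠ none
    · obtain ⟨v, hv⟩ := Option.ne_none_iff_exists'.mp h.1
      have hmem : star b ∈ univ.filter (fun c => vert c = some v ∧ vert (star c) ≠ none) := by
        simp only [Finset.mem_filter, Finset.mem_univ, true_and, hv, hinv b]
        exact h.2
      have hcard : ((univ.filter (fun c => vert c = some v ∧ vert (star c) ≠ none)).erase
          (star b)).card = 1 := by
        rw [Finset.card_erase_of_mem hmem, hIv v]
      obtain ⟨c, hc⟩ := Finset.card_eq_one.mp hcard
      have hcmem : c ∈ (univ.filter (fun c => vert c = some v ∧ vert (star c) ≠ none)).erase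
          (star b) := hc ▸ Finset.mem_singleton_self c
      rw [Finset.mem_erase, Finset.mem_filter] at hcmem
      refine ⟨c, fun _ => ⟨by rw [hv]; exact hcmem.2.2.1, hcmem.2.2.2, hcmem.1, ?_⟩⟩
      intro c' h1 h2 h3
      have hc' : c' ∈ (univ.filter (fun c => vert c = some v ∧ vert (star c) ≠ none)).erase
          (star b) := by
        rw [Finset.mem_erase, Finset.mem_filter]
        exact ⟨h3, Finset.mem_univ _, by rw [h1, hv], h2⟩
      rw [hc] at hc'
      exact Finset.mem_singleton.mp hc'
    · exact ⟨b, fun hc => absurd hc h⟩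
  choose σ hσ using hsig0
  have hbij : Function.Bijective star := (Function.Involutive.toPerm star hinv).bijective
  have sigv : ∀ b, vert b ≠ none → vert (star b) ≠ none → vert (σ b) = vert (star b) :=
    fun b h1 h2 => (hσ b ⟨h2, h1⟩).1
  have sigi : ∀ b, vert b ≠ none → vert (star b) ≠ none → vert (star (σ b)) ≠ none :=
    fun b h1 h2 => (hσ b ⟨h2, h1⟩).2.1
  have signe : ∀ b, vert b ≠ none → vert (star b) ≠ none → σ b ≠ star b :=
    fun b h1 h2 => (hσ b ⟨h2, h1⟩).2.2.1
  have sigu : ∀ b, vert b ≠ none → vert (star b) ≠ none →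
      ∀ c', vert c' = vert (star b) → vert (star c') ≠ none → c' ≠ star b → c' = σ b :=
    fun b h1 h2 => (hσ b ⟨h2, h1⟩).2.2.2
  have sigint : ∀ b, vert b ≠ none → vert (star b) ≠ none →
      vert (σ b) ≠ none ∧ vert (star (σ b)) ≠ none := fun b h1 h2 =>
    ⟨by rw [sigv b h1 h2]; exact h2, sigi b h1 h2⟩
  have key3 : ∀ b, vert b ≠ none → vert (star b) ≠ none → σ (star (σ b)) = star b := by
    intro b h1 h2
    have hσb := sigint b h1 h2
    have hx1 : vert (star (σ b)) ≠ none := hσb.2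
    have hx2 : vert (star (star (σ b))) ≠ none := by rw [hinv]; exact hσb.1
    refine (sigu (star (σ b)) hx1 hx2 (star b) ?_ ?_ ?_).symm
    · rw [hinv, sigv b h1 h2]
    · rw [hinv]; exact h1
    · rw [hinv]; exact fun h => (signe b h1 h2) h.symm
  set τ : B → B := fun c => star (σ (star c)) with hτ
  have tau_sig : ∀ b, vert b ≠ none → vert (star b) ≠ none → τ (σ b) = b := by
    intro b h1 h2
    show star (σ (star (σ b))) = b
    rw [key3 b h1 h2, hinv]
  have sig_tau : ∀ b, vert b ≠ none → vert (star b) ≠ none → σ (τ b) = b := by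
    intro b h1 h2
    show σ (star (σ (star b))) = b
    have := key3 (star b) h2 (by rw [hinv]; exact h1)
    rw [this, hinv]
  have star_sig : ∀ b, star (σ b) = τ (star b) := by
    intro b
    show star (σ b) = star (σ (star (star b)))
    rw [hinv]
  have tau_int : ∀ b, vert b ≠ none → vert (star b) ≠ none →
      vert (τ b) ≠ none ∧ vert (star (τ b)) ≠ none := by
    intro b h1 h2
    have h1' : vert (star (star b)) ≠ none := by rw [hinv]; exact h1
    have := sigint (star b) h2 h1'
    constructor
    · show vert (star (σ (star b))) ≠ none; exact this.2
    · show vert (star (star (σ (star b)))) ≠ none; rw [hinv]; exact this.1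
  have int_iter : ∀ (n : ℕ) (b), vert b ≠ none → vert (star b) ≠ none →
      vert (σ^[n] b) ≠ none ∧ vert (star (σ^[n] b)) ≠ none := by
    intro n
    induction n with
    | zero => intro b h1 h2; exact ⟨h1, h2⟩
    | succ n ih =>
      intro b h1 h2
      rw [Function.iterate_succ_apply']
      have h := ih b h1 h2
      exact sigint _ h.1 h.2
  have tau_sig_iter : ∀ (n : ℕ) (b), vert b ≠ none → vert (star b) ≠ none →
      τ^[n] (σ^[n] b) = b := by
    intro n
    induction n with
    | zero => intro b _ _; rfl
    | succ n ih =>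
      intro b h1 h2
      have hσb := sigint b h1 h2
      rw [Function.iterate_succ_apply σ n b, Function.iterate_succ_apply' τ n]
      rw [ih (σ b) hσb.1 hσb.2]
      exact tau_sig b h1 h2
  -- vertex decomposition
  have vdecomp : ∀ (v : V) (c : B), vert c = some v → vert (star c) ≠ none →
      ∃ e, vert e = some v ∧ vert (star e) = none ∧ e ≠ c ∧ e ≠ σ (star c) ∧ c ≠ σ (star c) ∧
        (univ.filter (fun b => vert b = some v)) = {e, c, σ (star c)} := by
    intro v c hc hc'
    obtain ⟨e, he⟩ := Finset.card_eq_one.mp (hk v)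
    have hemem : e ∈ univ.filter (fun b => vert b = some v ∧ vert (star b) = none) :=
      he ▸ Finset.mem_singleton_self e
    rw [Finset.mem_filter] at hemem
    obtain ⟨-, he1, he2⟩ := hemem
    have hsc1 : vert (star c) ≠ none := hc'
    have hsc2 : vert (star (star c)) ≠ none := by rw [hinv]; simp [hc]
    have hρ := sigint (star c) hsc1 hsc2
    have hρv : vert (σ (star c)) = some v := by
      rw [sigv (star c) hsc1 hsc2, hinv, hc]
    have hρc : σ (star c) ≠ c := by
      have := signe (star c) hsc1 hsc2
      rw [hinv] at this; exact this
    have hρs : vert (star (σ (star c))) ≠ none := hρ.2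
    have hec : e ≠ c := fun h => hc' (by rw [← h]; exact he2)
    have heρ : e ≠ σ (star c) := fun h => hρs (by rw [← h]; exact he2)
    refine ⟨e, he1, he2, hec, heρ, fun h => hρc h.symm, ?_⟩
    refine (Finset.eq_of_subset_of_card_le ?_ ?_).symm
    · intro y hy
      simp only [Finset.mem_insert, Finset.mem_singleton] at hy
      rcases hy with h|h|h <;> subst h <;> simp [he1, hc, hρv]
    · rw [hreg v, Finset.card_insert_of_notMem, Finset.card_insert_of_notMem,
        Finset.card_singleton]
      · simp [hρc]
        exact fun h => hρc h.symm
      · simp [hec, heρ]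
  -- value propagation along σ for solutions
  have msig : ∀ m : B → ℕ, (∀ b, m b ≤ p - 1) → (∀ b, m b + m (star b) = p) →
      (∀ v : V, ∑ b ∈ univ.filter (fun b => vert b = some v), m b = p + 1) →
      ∀ b, vert b ≠ none → vert (star b) ≠ none → m (σ b) = m b := by
    intro m hub hpair hsum b h1 h2
    obtain ⟨v, hv⟩ := Option.ne_none_iff_exists'.mp h2
    have h2' : vert (star (star b)) ≠ none := by rw [hinv]; exact h1
    obtain ⟨e, he1, he2, hec, heρ, hcρ, hfil⟩ := vdecomp v (star b) hv h2'
    rw [hinv] at hfil heρ hcρ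
    have hs := hsum v
    rw [hfil, Finset.sum_insert (by simp [hec, heρ]),
      Finset.sum_insert (by simpa using hcρ), Finset.sum_singleton] at hs
    have hme : m e = 1 := by
      have h := part2_main hp2 star vert hinv hreg hbetti m hub hpair hsum (star e) he2
      rw [hinv] at h; exact h.2
    have hp1 := hpair b
    have := hub b
    omega
  -- base point
  obtain ⟨v₁⟩ := hV
  have hIvpos : 0 < (univ.filter (fun b => vert b = some v₁ ∧ vert (star b) ≠ none)).card := by
    rw [hIv v₁]; norm_num
  obtain ⟨b₀, hb₀⟩ := Finset.card_pos.mp hIvpos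
  rw [Finset.mem_filter] at hb₀
  have hb₀1 : vert b₀ ≠ none := by rw [hb₀.2.1]; simp
  have hb₀2 : vert (star b₀) ≠ none := hb₀.2.2
  have hniter : ∀ k, vert (σ^[k] b₀) ≠ none ∧ vert (star (σ^[k] b₀)) ≠ none :=
    fun k => int_iter k b₀ hb₀1 hb₀2
  obtain ⟨i, j, hij, hijeq⟩ : ∃ i j : ℕ, i < j ∧ σ^[i] b₀ = σ^[j] b₀ := by
    obtain ⟨a1, a2, hxy, h⟩ := Finite.exists_ne_map_eq_of_infinite (fun n : ℕ => σ^[n] b₀)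
    rcases lt_or_gt_of_ne hxy with h'|h'
    exacts [⟨a1, a2, h', h⟩, ⟨a2, a1, h', h.symm⟩]
  set n := j - i with hn
  have hnpos : 0 < n := by omega
  have hper : σ^[n] b₀ = b₀ := by
    have h1 : σ^[i] (σ^[n] b₀) = σ^[i] b₀ := by
      rw [← Function.iterate_add_apply, show i + n = j by omega]
      exact hijeq.symm
    calc σ^[n] b₀ = τ^[i] (σ^[i] (σ^[n] b₀)) :=
          (tau_sig_iter i _ (hniter n).1 (hniter n).2).symm
    _ = τ^[i] (σ^[i] b₀) := by rw [h1]
    _ = b₀ := tau_sig_iter i b₀ hb₀1 hb₀2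
  have hshift : ∀ a q : ℕ, σ^[a + n * q] b₀ = σ^[a] b₀ := by
    intro a q
    induction q with
    | zero => simp
    | succ q ih =>
      rw [show a + n * (q+1) = (a + n * q) + n by ring, Function.iterate_add_apply, hper, ih]
  -- disjointness of the orbit from its star image
  have hdisj : ∀ k l : ℕ, σ^[k] b₀ ≠ star (σ^[l] b₀) := by
    intro k l heq
    set c := σ^[l] b₀ with hcdef
    have hciter : ∀ a : ℕ, σ^[a] c = σ^[a + l] b₀ := by
      intro a; rw [hcdef, ← Function.iterate_add_apply]
    have hcint : ∀ a : ℕ, vert (σ^[a] c) ≠ none ∧ vert (star (σ^[a] c)) ≠ none := by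
      intro a; rw [hciter]; exact hniter _
    have hcshift : ∀ a q : ℕ, σ^[a + n * q] c = σ^[a] c := by
      intro a q; rw [hciter, hciter, show a + n*q + l = (a+l) + n*q by ring, hshift]
    set e := (k + n * l) - l with hedef
    have hnl : l ≤ n * l := Nat.le_mul_of_pos_left l hnpos
    have he : star c = σ^[e] c := by
      rw [hciter, show e + l = k + n*l by omega, hshift k l]
      exact heq.symm
    -- star (σ^[jj] c) = σ^[X] c with X + jj = e + n*jj
    have hkey : ∀ jj : ℕ, ∃ X : ℕ, X + jj = e + n * jj ∧ star (σ^[jj] c) = σ^[X] c := by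
      intro jj
      have hle : jj ≤ n * jj := Nat.le_mul_of_pos_left jj hnpos
      refine ⟨(e + n * jj) - jj, by omega, ?_⟩
      have hsi : ∀ t : ℕ, star (σ^[t] c) = τ^[t] (star c) := by
        intro t
        induction t with
        | zero => rfl
        | succ t ih =>
          rw [Function.iterate_succ_apply' σ t, Function.iterate_succ_apply' τ t, star_sig, ih]
      have h2 : σ^[e + n * jj] c = σ^[jj] (σ^[(e + n * jj) - jj] c) := by
        have h3 : jj + ((e + n * jj) - jj) = e + n * jj := by omega
        conv_lhs => rw [← h3]
        rw [Function.iterate_add_apply]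
      rw [hsi jj, he, show σ^[e] c = σ^[e + n * jj] c from (hcshift e jj).symm, h2,
        tau_sig_iter jj _ (hcint _).1 (hcint _).2]
    obtain ⟨q, hq⟩ : ∃ q, e = n * q + e % n := ⟨e / n, (Nat.div_add_mod e n).symm⟩
    set r := e % n with hrdef
    have hrn : r < n := Nat.mod_lt _ hnpos
    -- a fixed point of star or of σ ∘ star on the orbit gives a contradiction
    have hcontr : ∀ jj q' : ℕ, ¬ (star (σ^[jj] c) = σ^[jj + n * q'] c ∨
        σ (star (σ^[jj] c)) = σ^[jj + n * q'] c) := by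
      intro jj q' h
      rw [hcshift jj q'] at h
      rcases h with h|h
      · exact hnf _ h
      · have hx := hcint jj
        have h1 : vert (star (σ^[jj] c)) ≠ none := hx.2
        have h2 : vert (star (star (σ^[jj] c))) ≠ none := by rw [hinv]; exact hx.1
        have := signe (star (σ^[jj] c)) h1 h2
        rw [hinv] at this
        exact this h
    by_cases hre : r % 2 = 0
    · -- jj := r/2, star-fixed point
      obtain ⟨X, hX1, hX2⟩ := hkey (r / 2)
      have hXeq : X = r / 2 + n * (q + r / 2) := by
        have hd : n * (q + r / 2) = n * q + n * (r / 2) := by ring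
        omega
      exact hcontr (r / 2) (q + r / 2) (Or.inl (by rw [hX2, hXeq]))
    · by_cases hne : n % 2 = 1
      · -- jj := (r+n)/2, star-fixed point
        obtain ⟨X, hX1, hX2⟩ := hkey ((r + n) / 2)
        have hXeq : X = (r + n) / 2 + n * (q + (r + n) / 2 - 1) := by
          have h1 : q + (r + n) / 2 - 1 + 1 = q + (r + n) / 2 := by omega
          have hd : n * (q + (r + n) / 2 - 1) + n = n * (q + (r + n) / 2) := by
            rw [← Nat.mul_succ, Nat.succ_eq_add_one, h1]
          have hd2 : n * (q + (r + n) / 2) = n * q + n * ((r + n) / 2) := by ring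
          omega
        exact hcontr ((r + n) / 2) (q + (r + n) / 2 - 1) (Or.inl (by rw [hX2, hXeq]))
      · -- jj := (r+1)/2, ρ-fixed point
        obtain ⟨X, hX1, hX2⟩ := hkey ((r + 1) / 2)
        have hXeq : X + 1 = (r + 1) / 2 + n * (q + (r + 1) / 2) := by
          have hd : n * (q + (r + 1) / 2) = n * q + n * ((r + 1) / 2) := by ring
          omega
        refine hcontr ((r + 1) / 2) (q + (r + 1) / 2) (Or.inr ?_)
        rw [hX2, ← Function.iterate_succ_apply' σ X, ← hXeq]
  -- orbit closure facts
  have hO_sig : ∀ k2 : ℕ, ∃ k', σ^[k'] b₀ = σ (σ^[k2] b₀) :=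
    fun k2 => ⟨k2 + 1, Function.iterate_succ_apply' σ k2 b₀⟩
  have hO_tau : ∀ k2 : ℕ, ∃ k', σ^[k'] b₀ = τ (σ^[k2] b₀) := by
    intro k2
    refine ⟨k2 + n - 1, ?_⟩
    have h1 : σ^[k2 + n] b₀ = σ^[k2] b₀ := by
      have := hshift k2 1
      rwa [mul_one] at this
    have h2 : k2 + n - 1 + 1 = k2 + n := by omega
    calc σ^[k2 + n - 1] b₀ = τ (σ (σ^[k2 + n - 1] b₀)) :=
        (tau_sig _ (hniter _).1 (hniter _).2).symm
    _ = τ (σ^[k2 + n] b₀) := by rw [← Function.iterate_succ_apply' σ, Nat.succ_eq_add_one, h2]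
    _ = τ (σ^[k2] b₀) := by rw [h1]
  have claim0 : ∀ cx d : B, vert cx ≠ none → vert (star cx) ≠ none →
      vert d ≠ none → vert (star d) ≠ none → vert cx = vert d →
      ((∃ k2, σ^[k2] b₀ = cx) ∨ (∃ k2, σ^[k2] b₀ = star cx)) →
      ((∃ k2, σ^[k2] b₀ = d) ∨ (∃ k2, σ^[k2] b₀ = star d)) := by
    intro cx d hc1 hc2 hd1 hd2 hvd hst
    by_cases hcd : d = cx
    · subst hcd; exact hst
    · have hd : d = σ (star cx) := by
        apply sigu (star cx) hc2 (by rw [hinv]; exact hc1)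
        · rw [hinv]; exact hvd.symm
        · exact hd2
        · rw [hinv]; exact hcd
      rcases hst with ⟨k2, hk2⟩|⟨k2, hk2⟩
      · right
        have hsd : star d = τ cx := by rw [hd, star_sig, hinv]
        rw [hsd, ← hk2]
        exact hO_tau k2
      · left
        rw [hd, ← hk2]
        exact hO_sig k2
  have wit : ∀ w : V, ∃ cx : B, vert cx = some w ∧ vert (star cx) ≠ none ∧
      ((∃ k2, σ^[k2] b₀ = cx) ∨ (∃ k2, σ^[k2] b₀ = star cx)) := by
    intro w
    have hpath := hconn v₁ w
    induction hpath with
    | refl => exact ⟨b₀, hb₀.2.1, hb₀2, Or.inl ⟨0, rfl⟩⟩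
    | tail h1 h2 ih =>
      obtain ⟨cx, hcx1, hcx2, hcx3⟩ := ih
      obtain ⟨d, hd1, hd2⟩ := h2
      have hd1' : vert d ≠ none := by rw [hd1]; simp
      have hd2' : vert (star d) ≠ none := by rw [hd2]; simp
      have hst := claim0 cx d (by rw [hcx1]; simp) hcx2 hd1' hd2' (by rw [hcx1, hd1]) hcx3
      refine ⟨star d, hd2, by rw [hinv, hd1]; simp, ?_⟩
      rcases hst with h|h
      · right; rw [hinv]; exact h
      · left; exact h
  have cover : ∀ b : B, vert b ≠ none → vert (star b) ≠ none →
      (∃ k2, σ^[k2] b₀ = b) ∨ (∃ k2, σ^[k2] b₀ = star b) := by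
    intro b h1 h2
    obtain ⟨v, hv⟩ := Option.ne_none_iff_exists'.mp h1
    obtain ⟨cx, hcx1, hcx2, hcx3⟩ := wit v
    exact claim0 cx b (by rw [hcx1]; simp) hcx2 h1 h2 (by rw [hcx1, hv]) hcx3
  have hm_iter : ∀ m : B → ℕ, (∀ b, m b ≤ p - 1) → (∀ b, m b + m (star b) = p) →
      (∀ v : V, ∑ b ∈ univ.filter (fun b => vert b = some v), m b = p + 1) →
      ∀ k2 : ℕ, m (σ^[k2] b₀) = m b₀ := by
    intro m hub hpair hsum k2
    induction k2 with
    | zero => rfl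
    | succ t ih =>
      rw [Function.iterate_succ_apply' σ t,
        msig m hub hpair hsum _ (hniter t).1 (hniter t).2, ih]
  set S : Set (B → ℕ) := { m : B → ℕ |
      (∀ b, 1 ≤ m b) ∧ (∀ b, m b ≤ p - 1) ∧ (∀ b, m b + m (star b) = p) ∧
      (∀ v : V, ∑ b ∈ Finset.univ.filter (fun b => vert b = some v), m b = p + 1) } with hS
  have hinj : Set.InjOn (fun m => m b₀) S := by
    intro m1 hm1 m2 hm2 heq
    simp only [hS, Set.mem_setOf_eq] at hm1 hm2
    obtain ⟨hlb1, hub1, hpair1, hsum1⟩ := hm1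
    obtain ⟨hlb2, hub2, hpair2, hsum2⟩ := hm2
    simp only at heq
    funext b
    by_cases h1 : vert b = none
    · rw [(part2_main hp2 star vert hinv hreg hbetti m1 hub1 hpair1 hsum1 b h1).1,
        (part2_main hp2 star vert hinv hreg hbetti m2 hub2 hpair2 hsum2 b h1).1]
    · by_cases h2 : vert (star b) = none
      · have e1 := (part2_main hp2 star vert hinv hreg hbetti m1 hub1 hpair1 hsum1 (star b) h2).2
        have e2 := (part2_main hp2 star vert hinv hreg hbetti m2 hub2 hpair2 hsum2 (star b) h2).2
        rw [hinv] at e1 e2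
        rw [e1, e2]
      · rcases cover b h1 h2 with ⟨k2, hk2⟩|⟨k2, hk2⟩
        · have e1 := hm_iter m1 hub1 hpair1 hsum1 k2
          have e2 := hm_iter m2 hub2 hpair2 hsum2 k2
          rw [hk2] at e1 e2
          rw [e1, e2, heq]
        · have e1 := hm_iter m1 hub1 hpair1 hsum1 k2
          have e2 := hm_iter m2 hub2 hpair2 hsum2 k2
          rw [hk2] at e1 e2
          have p1 := hpair1 b
          have p2 := hpair2 b
          have := hub1 b₀
          omega
  have himg : (fun m => m b₀) '' S = ↑(Finset.Icc 1 (p - 1)) := by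
    apply Set.Subset.antisymm
    · rintro x ⟨m, hm, rfl⟩
      simp only [hS, Set.mem_setOf_eq] at hm
      simp only [Finset.coe_Icc, Set.mem_Icc]
      exact ⟨hm.1 b₀, hm.2.1 b₀⟩
    · rintro x hx
      simp only [Finset.coe_Icc, Set.mem_Icc] at hx
      set mx : B → ℕ := fun b =>
        if ∃ k2, σ^[k2] b₀ = b then x
        else if ∃ k2, σ^[k2] b₀ = star b then p - x
        else if vert b = none then p - 1 else 1 with hmx
      have hvO : ∀ b, (∃ k2, σ^[k2] b₀ = b) → mx b = x := by
        intro b hb; rw [hmx]; simp only []; rw [if_pos hb]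
      have hvSO : ∀ b, (∃ k2, σ^[k2] b₀ = star b) → mx b = p - x := by
        intro b hb
        have hnb : ¬ ∃ k2, σ^[k2] b₀ = b := by
          rintro ⟨k2, rfl⟩
          obtain ⟨l2, hl2⟩ := hb
          exact hdisj l2 k2 hl2
        rw [hmx]; simp only []; rw [if_neg hnb, if_pos hb]
      have hvN : ∀ b, vert b = none ∨ vert (star b) = none →
          ¬(∃ k2, σ^[k2] b₀ = b) ∧ ¬(∃ k2, σ^[k2] b₀ = star b) := by
        intro b hb
        constructor
        · rintro ⟨k2, rfl⟩
          rcases hb with h|h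
          exacts [(hniter k2).1 h, (hniter k2).2 h]
        · rintro ⟨k2, hk2⟩
          rcases hb with h|h
          · exact (hniter k2).2 (by rw [hk2, hinv]; exact h)
          · exact (hniter k2).1 (by rw [hk2]; exact h)
      have hvfree : ∀ b, vert b = none → mx b = p - 1 := by
        intro b hb
        have h := hvN b (Or.inl hb)
        rw [hmx]; simp only []; rw [if_neg h.1, if_neg h.2, if_pos hb]
      have hvside : ∀ b, vert b ≠ none → vert (star b) = none → mx b = 1 := by
        intro b hb1 hb2
        have h := hvN b (Or.inr hb2)
        rw [hmx]; simp only []; rw [if_neg h.1, if_neg h.2, if_neg hb1]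
      refine ⟨mx, ?_, ?_⟩
      · simp only [hS, Set.mem_setOf_eq]
        refine ⟨?_, ?_, ?_, ?_⟩
        · intro b; rw [hmx]; simp only []; split_ifs <;> omega
        · intro b; rw [hmx]; simp only []; split_ifs <;> omega
        · intro b
          by_cases h1 : vert b = none
          · obtain ⟨w, hw⟩ := hext b h1
            rw [hvfree b h1, hvside (star b) (by rw [hw]; simp) (by rw [hinv]; exact h1)]
            omega
          · by_cases h2 : vert (star b) = none
            · rw [hvside b h1 h2, hvfree (star b) h2]
              omega
            · rcases cover b h1 h2 with hO|hSO
              · rw [hvO b hO]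
                have h := hvSO (star b) (by rw [hinv]; exact hO)
                rw [h]
                omega
              · rw [hvSO b hSO, hvO (star b) hSO]
                omega
        · intro v
          obtain ⟨cx, hcx1, hcx2, hcx3⟩ := wit v
          obtain ⟨e2, he1, he2, hec, heρ, hcρ, hfil⟩ := vdecomp v cx hcx1 hcx2
          rw [hfil, Finset.sum_insert (by simp [hec, heρ]),
            Finset.sum_insert (by simpa using hcρ), Finset.sum_singleton]
          have hmxe : mx e2 = 1 := hvside e2 (by rw [he1]; simp) he2
          have hρstat : (mx cx = x ∧ mx (σ (star cx)) = p - x) ∨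
              (mx cx = p - x ∧ mx (σ (star cx)) = x) := by
            rcases hcx3 with h|h
            · left
              refine ⟨hvO cx h, hvSO _ ?_⟩
              have hh : star (σ (star cx)) = τ cx := by rw [star_sig, hinv]
              rw [hh]
              obtain ⟨k2, hk2⟩ := h
              rw [← hk2]
              exact hO_tau k2
            · right
              refine ⟨hvSO _ h, hvO _ ?_⟩
              obtain ⟨k2, hk2⟩ := h
              rw [← hk2]
              exact hO_sig k2
          rcases hρstat with ⟨ha, hb⟩|⟨ha, hb⟩ <;> rw [hmxe, ha, hb] <;> omega
      · exact hvO b₀ ⟨0, rfl⟩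
  have hfin : S.ncard = (Finset.Icc 1 (p - 1)).card := by
    rw [← Set.ncard_image_of_injOn hinj, himg, Set.ncard_coe_finset]
  rw [hfin, Nat.card_Icc]
  omega



lemma sum_filter_subtype {α : Type} [Fintype α] (pr : α → Prop) [DecidablePred pr]
    (P : α → Prop) [DecidablePred P] (f : α → ℕ) (h : ∀ x, P x → pr x) :
    ∑ b ∈ univ.filter (fun b : {x // pr x} => P b.1), f b.1 = ∑ b ∈ univ.filter P, f b := by
  refine Finset.sum_bij (fun b _ => b.1) ?_ ?_ ?_ ?_
  · intro a ha
    simp only [mem_filter, mem_univ, true_and] at ha ⊢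
    exact ha
  · intro a _ b _ hab
    exact Subtype.ext hab
  · intro b hb
    simp only [mem_filter, mem_univ, true_and] at hb
    exact ⟨⟨b, h b hb⟩, by simp [hb], rfl⟩
  · intros; rfl

lemma card_filter_subtype {α : Type} [Fintype α] (pr : α → Prop) [DecidablePred pr]
    (P : α → Prop) [DecidablePred P] (h : ∀ x, P x → pr x) :
    (univ.filter (fun b : {x // pr x} => P b.1)).card = (univ.filter P).card := by
  rw [Finset.card_eq_sum_ones, Finset.card_eq_sum_ones]
  exact sum_filter_subtype pr P (fun _ => 1) h

theorem count_main (p : ℕ) (hp2 : 2 < p) : ∀ N : ℕ, ∀ (B V : Type)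
    [Fintype B] [Fintype V] [DecidableEq B] [DecidableEq V],
    ∀ (star : B → B) (vert : B → Option V),
    (∀ b, star (star b) = b) → (∀ b, star b ≠ b) →
    (∀ v : V, (Finset.univ.filter (fun b => vert b = some v)).card = 3) →
    (∀ b, vert b = none → ∃ v, vert (star b) = some v) →
    (∀ u v : V, Relation.ReflTransGen
      (fun x y => ∃ b, vert b = some x ∧ vert (star b) = some y) u v) →
    Nonempty V →
    (Fintype.card B =
      2 * Fintype.card V + 2 * (Finset.univ.filter (fun b => vert b = none)).card) →
    Fintype.card V = N →
    ({ m : B → ℕ |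
        (∀ b, 1 ≤ m b) ∧ (∀ b, m b ≤ p - 1) ∧ (∀ b, m b + m (star b) = p) ∧
        (∀ v : V, ∑ b ∈ Finset.univ.filter (fun b => vert b = some v), m b = p + 1) }).ncard
      = p - 1 := by
  intro N
  induction N using Nat.strong_induction_on with
  | _ N ih =>
  intro B V _ _ _ _ star vert hinv hnf hreg hext hconn hV hbetti hN
  classical
  set r := (univ.filter (fun b => vert b = none)).card with hr
  have hcard : Fintype.card B = 3 * Fintype.card V + r := card_B_eq vert hreg
  have hrN : r = N := by omega
  -- the number of external branches at each vertex
  set k : V → ℕ := fun v =>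
    (univ.filter (fun b => vert b = some v ∧ vert (star b) = none)).card with hkdef
  have hsumk : ∑ v : V, k v = r := by
    have hbijT : r = (univ.filter (fun b => ¬ vert b = none ∧ vert (star b) = none)).card := by
      rw [hr]
      apply Finset.card_bij (fun b _ => star b)
      · intro a ha
        rw [Finset.mem_filter] at ha ⊢
        obtain ⟨w, hw⟩ := hext a ha.2
        refine ⟨mem_univ _, by rw [hw]; simp, by rw [hinv]; exact ha.2⟩
      · intro a _ b _ hab
        have h2 := congrArg star hab
        rwa [hinv, hinv] at h2
      · intro b hb
        rw [Finset.mem_filter] at hb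
        exact ⟨star b, by rw [Finset.mem_filter]; exact ⟨mem_univ _, hb.2.2⟩, hinv b⟩
    have h := Finset.card_eq_sum_card_fiberwise
      (f := vert) (s := univ.filter (fun b => ¬ vert b = none ∧ vert (star b) = none))
      (t := (univ : Finset (Option V))) (fun x _ => mem_univ _)
    rw [Fintype.sum_option] at h
    have h0 : ((univ.filter (fun b => ¬ vert b = none ∧ vert (star b) = none)).filter
        (fun b => vert b = none)).card = 0 := by
      rw [Finset.card_eq_zero]
      ext b
      simp only [Finset.mem_filter, Finset.notMem_empty, iff_false, not_and]
      rintro ⟨-, h1, -⟩ h2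
      exact h1 h2
    have hfib : ∀ v : V, ((univ.filter (fun b => ¬ vert b = none ∧ vert (star b) = none)).filter
        (fun b => vert b = some v)).card = k v := by
      intro v
      rw [hkdef]
      congr 1
      ext b
      simp only [Finset.mem_filter, Finset.mem_univ, true_and]
      constructor
      · rintro ⟨⟨-, h1⟩, h2⟩; exact ⟨h2, h1⟩
      · rintro ⟨h1, h2⟩; exact ⟨⟨by rw [h1]; simp, h2⟩, h1⟩
    rw [h0] at h
    simp only [hfib] at h
    rw [hbijT, h]
    omega
  by_cases hA : ∃ v, 2 ≤ k v
  · -- peeling case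
    obtain ⟨v₀, hv₀⟩ := hA
    rw [hkdef] at hv₀
    simp only at hv₀
    obtain ⟨s1, hs1m, s2, hs2m, hs12⟩ := Finset.one_lt_card.mp
      (by omega : 1 < (univ.filter (fun b => vert b = some v₀ ∧ vert (star b) = none)).card)
    rw [Finset.mem_filter] at hs1m hs2m
    obtain ⟨-, hs1v, hs1f⟩ := hs1m
    obtain ⟨-, hs2v, hs2f⟩ := hs2m
    have hss : star s1 ≠ star s2 := by
      intro h
      apply hs12
      have h2 := congrArg star h
      rwa [hinv, hinv] at h2
    have hd11 : s1 ≠ star s1 := fun h => hnf s1 h.symm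
    have hd22 : s2 ≠ star s2 := fun h => hnf s2 h.symm
    have hd12 : s1 ≠ star s2 := by
      intro h
      have h2 := hs1v
      rw [h, hs2f] at h2
      simp at h2
    have hd21 : s2 ≠ star s1 := by
      intro h
      have h2 := hs2v
      rw [h, hs1f] at h2
      simp at h2
    set D : Finset B := {s1, s2, star s1, star s2} with hD
    have hmemD : ∀ b, b ∈ D ↔ b = s1 ∨ b = s2 ∨ b = star s1 ∨ b = star s2 := by
      intro b
      rw [hD]
      simp [Finset.mem_insert, Finset.mem_singleton]
    have hDvert : ∀ b ∈ D, vert b = some v₀ ∨ vert b = none := by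
      intro b hb
      rcases (hmemD b).mp hb with rfl|rfl|rfl|rfl
      exacts [Or.inl hs1v, Or.inl hs2v, Or.inr hs1f, Or.inr hs2f]
    have hDcard : D.card = 4 := by
      rw [hD, Finset.card_insert_of_notMem (by simp [hs12, hd11, hd12]),
        Finset.card_insert_of_notMem (by simp [hd21, hd22]),
        Finset.card_insert_of_notMem (by simp [hss]), Finset.card_singleton]
    have hclosed : ∀ b, b ∉ D → star b ∉ D := by
      intro b hb hsb
      apply hb
      rcases (hmemD (star b)).mp hsb with h|h|h|h
      · have h2 := congrArg star h
        rw [hinv] at h2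
        exact (hmemD b).mpr (Or.inr (Or.inr (Or.inl h2)))
      · have h2 := congrArg star h
        rw [hinv] at h2
        exact (hmemD b).mpr (Or.inr (Or.inr (Or.inr h2)))
      · have h2 := congrArg star h
        rw [hinv, hinv] at h2
        exact (hmemD b).mpr (Or.inl h2)
      · have h2 := congrArg star h
        rw [hinv, hinv] at h2
        exact (hmemD b).mpr (Or.inr (Or.inl h2))
    -- the third branch at v₀
    have hsub12 : ({s1, s2} : Finset B) ⊆ univ.filter (fun b => vert b = some v₀) := by
      intro x hx
      rcases Finset.mem_insert.mp hx with rfl|hx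
      · simp [hs1v]
      · rw [Finset.mem_singleton] at hx
        subst hx
        simp [hs2v]
    have hc12 : ({s1, s2} : Finset B).card = 2 := by
      rw [Finset.card_insert_of_notMem (by simp [hs12]), Finset.card_singleton]
    have hsd : ((univ.filter (fun b => vert b = some v₀)) \ {s1, s2}).card = 1 := by
      rw [Finset.card_sdiff_of_subset hsub12, hreg v₀, hc12]
    obtain ⟨bp, hbp⟩ := Finset.card_eq_one.mp hsd
    have hbpm : bp ∈ (univ.filter (fun b => vert b = some v₀)) \ {s1, s2} :=
      hbp ▸ Finset.mem_singleton_self bp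
    rw [Finset.mem_sdiff, Finset.mem_filter] at hbpm
    obtain ⟨⟨-, hbpv⟩, hbp12⟩ := hbpm
    have hbp1 : bp ≠ s1 := fun h => hbp12 (by simp [h])
    have hbp2 : bp ≠ s2 := fun h => hbp12 (by simp [h])
    have hs1bp : s1 ≠ bp := fun h => hbp1 h.symm
    have hs2bp : s2 ≠ bp := fun h => hbp2 h.symm
    have hAv : univ.filter (fun b => vert b = some v₀) = {s1, s2, bp} := by
      refine (Finset.eq_of_subset_of_card_le ?_ ?_).symm
      · intro x hx
        simp only [Finset.mem_insert, Finset.mem_singleton] at hx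
        rcases hx with rfl|rfl|rfl <;> simp [hs1v, hs2v, hbpv]
      · rw [hreg v₀, Finset.card_insert_of_notMem (by simp [hs12, hs1bp]),
          Finset.card_insert_of_notMem (by simp [hs2bp]),
          Finset.card_singleton]
    have hr2 : 2 ≤ r := by
      have hsubf : ({star s1, star s2} : Finset B) ⊆ univ.filter (fun b => vert b = none) := by
        intro x hx
        rcases Finset.mem_insert.mp hx with rfl|hx
        · simp [hs1f]
        · rw [Finset.mem_singleton] at hx
          subst hx
          simp [hs2f]
      have hcf : ({star s1, star s2} : Finset B).card = 2 := by
        rw [Finset.card_insert_of_notMem (by simp [hss]), Finset.card_singleton]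
      have := Finset.card_le_card hsubf
      omega
    have hN2 : 2 ≤ N := by omega
    have hbpint : vert (star bp) ≠ none := by
      intro hno
      obtain ⟨u, hu⟩ := Fintype.exists_ne_of_one_lt_card (by omega : 1 < Fintype.card V) v₀
      rcases Relation.ReflTransGen.cases_head (hconn v₀ u) with heq | ⟨mid, ⟨d, hd1, hd2⟩, -⟩
      · exact hu heq.symm
      · have hdm : d ∈ univ.filter (fun b => vert b = some v₀) := by simp [hd1]
        rw [hAv] at hdm
        simp only [Finset.mem_insert, Finset.mem_singleton] at hdm
        rcases hdm with rfl|rfl|rfl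
        · rw [hs1f] at hd2; simp at hd2
        · rw [hs2f] at hd2; simp at hd2
        · rw [hno] at hd2; simp at hd2
    obtain ⟨u₀, hu₀⟩ := Option.ne_none_iff_exists'.mp hbpint
    have hsbp_ne : ∀ x ∈ ({s1, s2, bp} : Finset B), star bp ≠ x := by
      intro x hx
      simp only [Finset.mem_insert, Finset.mem_singleton] at hx
      rcases hx with hx|hx|hx <;> subst hx
      · intro h
        have h2 := congrArg star h
        rw [hinv] at h2
        have h3 := hbpv
        rw [h2, hs1f] at h3
        simp at h3
      · intro h
        have h2 := congrArg star h
        rw [hinv] at h2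
        have h3 := hbpv
        rw [h2, hs2f] at h3
        simp at h3
      · exact hnf _
    have hu₀ne : u₀ ≠ v₀ := by
      intro h
      subst h
      have hmem : star bp ∈ univ.filter (fun b => vert b = some u₀) := by simp [hu₀]
      rw [hAv] at hmem
      exact hsbp_ne (star bp) hmem rfl
    have hbpD : bp ∉ D := by
      intro h
      rcases (hmemD bp).mp h with h2|h2|h2|h2
      · exact hbp1 h2
      · exact hbp2 h2
      · rw [h2, hs1f] at hbpv; simp at hbpv
      · rw [h2, hs2f] at hbpv; simp at hbpv
    have hsbpD : star bp ∉ D := by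
      intro h
      rcases (hmemD (star bp)).mp h with h2|h2|h2|h2
      · exact hsbp_ne s1 (by simp) h2
      · exact hsbp_ne s2 (by simp) h2
      · have h3 := congrArg star h2
        rw [hinv, hinv] at h3
        exact hbp1 h3
      · have h3 := congrArg star h2
        rw [hinv, hinv] at h3
        exact hbp2 h3
    -- the smaller instance
    set star' : {b : B // b ∉ D} → {b : B // b ∉ D} :=
      fun b => ⟨star b.1, hclosed b.1 b.2⟩ with hstar'
    set vert' : {b : B // b ∉ D} → Option {u : V // u ≠ v₀} :=
      fun b => (vert b.1).bind (fun u => if h : u = v₀ then none else some ⟨u, h⟩) with hvert'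
    have hv'some : ∀ (b : {b : B // b ∉ D}) (u : V) (hu : u ≠ v₀),
        (vert' b = some ⟨u, hu⟩ ↔ vert b.1 = some u) := by
      intro b u hu
      rw [hvert']
      simp only []
      rcases hb : vert b.1 with _|w
      · simp
      · by_cases hw : w = v₀
        · subst hw
          simp only [Option.bind_some, dif_pos rfl]
          constructor
          · intro h; simp at h
          · intro h
            injection h with h2
            exact absurd h2.symm hu
        · simp only [Option.bind_some, dif_neg hw, Option.some.injEq, Subtype.mk.injEq]
    have hv'none : ∀ b : {b : B // b ∉ D},
        (vert' b = none ↔ (vert b.1 = none ∨ vert b.1 = some v₀)) := by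
      intro b
      rw [hvert']
      simp only []
      rcases hb : vert b.1 with _|w
      · simp
      · by_cases hw : w = v₀
        · subst hw
          simp
        · simp only [Option.bind_some, dif_neg hw]
          constructor
          · intro h; simp at h
          · rintro (h|h)
            · simp at h
            · injection h with h2
              exact absurd h2 hw
    have hinv' : ∀ b', star' (star' b') = b' := fun b' => Subtype.ext (hinv b'.1)
    have hnf' : ∀ b', star' b' ≠ b' := fun b' h => hnf b'.1 (congrArg Subtype.val h)
    have hfiltercong : ∀ u' : {u : V // u ≠ v₀},
        (univ.filter (fun b : {b : B // b ∉ D} => vert' b = some u')) =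
        (univ.filter (fun b : {b : B // b ∉ D} => vert b.1 = some u'.1)) := by
      intro u'
      apply Finset.filter_congr
      intro b _
      exact hv'some b u'.1 u'.2
    have hnotD : ∀ (u : V), u ≠ v₀ → ∀ x : B, vert x = some u → x ∉ D := by
      intro u hu x hx hxD
      rcases hDvert x hxD with h|h <;> rw [hx] at h
      · injection h with h2
        exact hu h2
      · simp at h
    have hreg' : ∀ u' : {u : V // u ≠ v₀},
        (univ.filter (fun b : {b : B // b ∉ D} => vert' b = some u')).card = 3 := by
      intro u'
      rw [hfiltercong u', card_filter_subtype (fun b => b ∉ D) (fun b => vert b = some u'.1)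
        (hnotD u'.1 u'.2), hreg u'.1]
    have hext' : ∀ b' : {b : B // b ∉ D}, vert' b' = none →
        ∃ u', vert' (star' b') = some u' := by
      intro b' hb'
      rw [hv'none] at hb'
      rcases hb' with h | h
      · obtain ⟨w, hw⟩ := hext b'.1 h
        have hwne : w ≠ v₀ := by
          intro hwv
          subst hwv
          have hmem : star b'.1 ∈ univ.filter (fun b => vert b = some w) := by simp [hw]
          rw [hAv] at hmem
          simp only [Finset.mem_insert, Finset.mem_singleton] at hmem
          rcases hmem with h1|h1|h1
          · apply b'.2
            have h2 := congrArg star h1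
            rw [hinv] at h2
            exact (hmemD b'.1).mpr (Or.inr (Or.inr (Or.inl h2)))
          · apply b'.2
            have h2 := congrArg star h1
            rw [hinv] at h2
            exact (hmemD b'.1).mpr (Or.inr (Or.inr (Or.inr h2)))
          · have h2 := congrArg star h1
            rw [hinv] at h2
            rw [h2, hu₀] at h
            simp at h
        exact ⟨⟨w, hwne⟩, (hv'some _ w hwne).mpr hw⟩
      · have hbp' : b'.1 = bp := by
          have hmem : b'.1 ∈ univ.filter (fun b => vert b = some v₀) := by simp [h]
          rw [hAv] at hmem
          simp only [Finset.mem_insert, Finset.mem_singleton] at hmem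
          rcases hmem with h1|h1|h1
          · exact absurd ((hmemD b'.1).mpr (Or.inl h1)) b'.2
          · exact absurd ((hmemD b'.1).mpr (Or.inr (Or.inl h1))) b'.2
          · exact h1
        refine ⟨⟨u₀, hu₀ne⟩, (hv'some _ u₀ hu₀ne).mpr ?_⟩
        show vert (star b'.1) = some u₀
        rw [hbp']
        exact hu₀
    have hstep_out : ∀ y : V, (∃ b, vert b = some v₀ ∧ vert (star b) = some y) → y = u₀ := by
      rintro y ⟨d, hd1, hd2⟩
      have hmem : d ∈ univ.filter (fun b => vert b = some v₀) := by simp [hd1]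
      rw [hAv] at hmem
      simp only [Finset.mem_insert, Finset.mem_singleton] at hmem
      rcases hmem with h1|h1|h1 <;> subst h1
      · rw [hs1f] at hd2; simp at hd2
      · rw [hs2f] at hd2; simp at hd2
      · rw [hu₀] at hd2; injection hd2 with h2; exact h2.symm
    have hstep_in : ∀ x : V, (∃ b, vert b = some x ∧ vert (star b) = some v₀) → x = u₀ := by
      rintro x ⟨d, hd1, hd2⟩
      have hmem : star d ∈ univ.filter (fun b => vert b = some v₀) := by simp [hd2]
      rw [hAv] at hmem
      simp only [Finset.mem_insert, Finset.mem_singleton] at hmem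
      rcases hmem with h1|h1|h1
      · have h2 : d = star s1 := by rw [← hinv d, h1]
        rw [h2, hs1f] at hd1
        simp at hd1
      · have h2 : d = star s2 := by rw [← hinv d, h1]
        rw [h2, hs2f] at hd1
        simp at hd1
      · have h2 : d = star bp := by rw [← hinv d, h1]
        rw [h2, hu₀] at hd1
        injection hd1 with h3
        exact h3.symm
    have hstep_new : ∀ (x y : V) (hx : x ≠ v₀) (hy : y ≠ v₀),
        (∃ b, vert b = some x ∧ vert (star b) = some y) →
        (∃ b' : {b : B // b ∉ D}, vert' b' = some ⟨x, hx⟩ ∧ vert' (star' b') = some ⟨y, hy⟩) := by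
      rintro x y hx hy ⟨d, hd1, hd2⟩
      have hdD : d ∉ D := hnotD x hx d hd1
      refine ⟨⟨d, hdD⟩, (hv'some _ x hx).mpr hd1, (hv'some _ y hy).mpr ?_⟩
      show vert (star d) = some y
      exact hd2
    have hconn' : ∀ u' w' : {u : V // u ≠ v₀}, Relation.ReflTransGen
        (fun x y : {u : V // u ≠ v₀} =>
          ∃ b' : {b : B // b ∉ D}, vert' b' = some x ∧ vert' (star' b') = some y) u' w' := by
      intro u' w'
      have key : ∀ w : V, Relation.ReflTransGen
          (fun x y => ∃ b, vert b = some x ∧ vert (star b) = some y) u'.1 w →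
          (∀ hw : w ≠ v₀, Relation.ReflTransGen
            (fun x y : {u : V // u ≠ v₀} => ∃ b' : {b : B // b ∉ D},
              vert' b' = some x ∧ vert' (star' b') = some y) u' ⟨w, hw⟩) ∧
          (w = v₀ → Relation.ReflTransGen
            (fun x y : {u : V // u ≠ v₀} => ∃ b' : {b : B // b ∉ D},
              vert' b' = some x ∧ vert' (star' b') = some y) u' ⟨u₀, hu₀ne⟩) := by
        intro w hw
        induction hw with
        | refl =>
          constructor
          · intro hww
            have he : (⟨u'.1, hww⟩ : {u : V // u ≠ v₀}) = u' := rfl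
            rw [he]
          · intro hww
            exact absurd hww u'.2
        | @tail x y h1 h2 ihh =>
          constructor
          · intro hy
            by_cases hxv : x = v₀
            · have hyu : y = u₀ := hstep_out y (hxv ▸ h2)
              have he : (⟨y, hy⟩ : {u : V // u ≠ v₀}) = ⟨u₀, hu₀ne⟩ := Subtype.ext hyu
              rw [he]
              exact ihh.2 hxv
            · exact (ihh.1 hxv).tail (hstep_new x y hxv hy h2)
          · intro hyv
            have hxu : x = u₀ := hstep_in x (hyv ▸ h2)
            have hxv : x ≠ v₀ := by rw [hxu]; exact hu₀ne
            have h3 := ihh.1 hxv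
            have he : (⟨x, hxv⟩ : {u : V // u ≠ v₀}) = ⟨u₀, hu₀ne⟩ := Subtype.ext hxu
            rw [he] at h3
            exact h3
      exact (key w'.1 (hconn u'.1 w'.1)).1 w'.2
    -- cardinalities
    have hcV' : Fintype.card {u : V // u ≠ v₀} = N - 1 := by
      rw [Fintype.card_subtype]
      rw [Finset.filter_ne', Finset.card_erase_of_mem (mem_univ _), Finset.card_univ, hN]
    have hcB' : Fintype.card {b : B // b ∉ D} = Fintype.card B - 4 := by
      rw [Fintype.card_subtype]
      have he : univ.filter (fun b => b ∉ D) = univ \ D := by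
        ext x
        simp [Finset.mem_sdiff]
      rw [he, Finset.card_sdiff_of_subset (Finset.subset_univ D), Finset.card_univ, hDcard]
    have h3' := card_B_eq vert' hreg'
    have hbetti' : Fintype.card {b : B // b ∉ D} =
        2 * Fintype.card {u : V // u ≠ v₀} +
        2 * (univ.filter (fun b : {b : B // b ∉ D} => vert' b = none)).card := by
      omega
    -- transfer the count along restriction
    set F : (B → ℕ) → ({b : B // b ∉ D} → ℕ) := fun m b' => m b'.1 with hF
    have hs1D : s1 ∈ D := (hmemD s1).mpr (Or.inl rfl)
    have hs2D : s2 ∈ D := (hmemD s2).mpr (Or.inr (Or.inl rfl))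
    have hss1D : star s1 ∈ D := (hmemD _).mpr (Or.inr (Or.inr (Or.inl rfl)))
    have hss2D : star s2 ∈ D := (hmemD _).mpr (Or.inr (Or.inr (Or.inr rfl)))
    have hinj : Set.InjOn F { m : B → ℕ |
        (∀ b, 1 ≤ m b) ∧ (∀ b, m b ≤ p - 1) ∧ (∀ b, m b + m (star b) = p) ∧
        (∀ v : V, ∑ b ∈ Finset.univ.filter (fun b => vert b = some v), m b = p + 1) } := by
      intro m1 hm1 m2 hm2 heq
      simp only [Set.mem_setOf_eq] at hm1 hm2
      obtain ⟨hlb1, hub1, hpair1, hsum1⟩ := hm1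
      obtain ⟨hlb2, hub2, hpair2, hsum2⟩ := hm2
      funext b
      by_cases hbD : b ∈ D
      · have e1 := part2_main hp2 star vert hinv hreg hbetti m1 hub1 hpair1 hsum1
        have e2 := part2_main hp2 star vert hinv hreg hbetti m2 hub2 hpair2 hsum2
        rcases (hmemD b).mp hbD with h|h|h|h <;> rw [h]
        · have f1 := (e1 (star s1) hs1f).2
          have f2 := (e2 (star s1) hs1f).2
          rw [hinv] at f1 f2
          rw [f1, f2]
        · have f1 := (e1 (star s2) hs2f).2
          have f2 := (e2 (star s2) hs2f).2
          rw [hinv] at f1 f2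
          rw [f1, f2]
        · rw [(e1 (star s1) hs1f).1, (e2 (star s1) hs1f).1]
        · rw [(e1 (star s2) hs2f).1, (e2 (star s2) hs2f).1]
      · exact congrFun heq ⟨b, hbD⟩
    have himg : F '' { m : B → ℕ |
        (∀ b, 1 ≤ m b) ∧ (∀ b, m b ≤ p - 1) ∧ (∀ b, m b + m (star b) = p) ∧
        (∀ v : V, ∑ b ∈ Finset.univ.filter (fun b => vert b = some v), m b = p + 1) } =
        { m : {b : B // b ∉ D} → ℕ |
          (∀ b, 1 ≤ m b) ∧ (∀ b, m b ≤ p - 1) ∧ (∀ b, m b + m (star' b) = p) ∧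
          (∀ v : {u : V // u ≠ v₀}, ∑ b ∈ Finset.univ.filter
            (fun b => vert' b = some v), m b = p + 1) } := by
      apply Set.Subset.antisymm
      · rintro m' ⟨m, hm, rfl⟩
        simp only [Set.mem_setOf_eq] at hm ⊢
        obtain ⟨hlb, hub, hpair, hsum⟩ := hm
        refine ⟨fun b' => hlb b'.1, fun b' => hub b'.1, fun b' => hpair b'.1, ?_⟩
        intro u'
        rw [hfiltercong u']
        have hs := sum_filter_subtype (fun b => b ∉ D) (fun b => vert b = some u'.1) m
          (hnotD u'.1 u'.2)
        rw [hF]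
        simp only []
        rw [hs]
        exact hsum u'.1
      · rintro m' hm'
        simp only [Set.mem_setOf_eq] at hm'
        obtain ⟨hlb', hub', hpair', hsum'⟩ := hm'
        set m0 : B → ℕ := fun b => if hb : b ∈ D then 0 else m' ⟨b, hb⟩ with hm0
        set m : B → ℕ := fun b =>
          if b ∈ D then (if vert b = none then p - 1 else 1) else m0 b with hm
        have hval_in : ∀ (b : B) (hb : b ∉ D), m b = m' ⟨b, hb⟩ := by
          intro b hb
          rw [hm, hm0]
          simp only []
          rw [if_neg hb, dif_neg hb]
        have hvs1 : m s1 = 1 := by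
          rw [hm]; simp only []
          rw [if_pos hs1D, if_neg (by rw [hs1v]; simp)]
        have hvs2 : m s2 = 1 := by
          rw [hm]; simp only []
          rw [if_pos hs2D, if_neg (by rw [hs2v]; simp)]
        have hvss1 : m (star s1) = p - 1 := by
          rw [hm]; simp only []
          rw [if_pos hss1D, if_pos hs1f]
        have hvss2 : m (star s2) = p - 1 := by
          rw [hm]; simp only []
          rw [if_pos hss2D, if_pos hs2f]
        have hbnd : ∀ b : B, m b = 1 ∨ m b = p - 1 ∨ ∃ hb : b ∉ D, m b = m' ⟨b, hb⟩ := by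
          intro b
          by_cases hbD : b ∈ D
          · rcases (hmemD b).mp hbD with h|h|h|h <;> rw [h]
            · exact Or.inl hvs1
            · exact Or.inl hvs2
            · exact Or.inr (Or.inl hvss1)
            · exact Or.inr (Or.inl hvss2)
          · exact Or.inr (Or.inr ⟨hbD, hval_in b hbD⟩)
        have hbpfree : vert' ⟨bp, hbpD⟩ = none := (hv'none _).mpr (Or.inr hbpv)
        have hmbp : m bp = p - 1 := by
          rw [hval_in bp hbpD]
          exact (part2_main hp2 star' vert' hinv' hreg' hbetti' m' hub' hpair' hsum'
            ⟨bp, hbpD⟩ hbpfree).1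
        refine ⟨m, ⟨?_, ?_, ?_, ?_⟩, ?_⟩
        · intro b
          rcases hbnd b with h|h|⟨hb, h⟩ <;> rw [h]
          · omega
          · exact hlb' _
        · intro b
          rcases hbnd b with h|h|⟨hb, h⟩ <;> rw [h]
          · omega
          · exact hub' _
        · intro b
          by_cases hbD : b ∈ D
          · rcases (hmemD b).mp hbD with h|h|h|h <;> rw [h]
            · rw [hvs1, hvss1]; omega
            · rw [hvs2, hvss2]; omega
            · rw [hvss1, hinv, hvs1]; omega
            · rw [hvss2, hinv, hvs2]; omega
          · rw [hval_in b hbD, hval_in (star b) (hclosed b hbD)]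
            exact hpair' ⟨b, hbD⟩
        · intro v
          by_cases hv : v = v₀
          · subst hv
            rw [hAv, Finset.sum_insert (by simp [hs12, hs1bp]),
              Finset.sum_insert (by simp [hs2bp]), Finset.sum_singleton]
            rw [hvs1, hvs2, hmbp]
            omega
          · have hs := sum_filter_subtype (fun b => b ∉ D) (fun b => vert b = some v) m
              (hnotD v hv)
            rw [← hs]
            have he : ∀ b' ∈ univ.filter (fun b' : {b : B // b ∉ D} => vert b'.1 = some v),
                m b'.1 = m' b' := by
              intro b' _
              rw [hval_in b'.1 b'.2]
            rw [Finset.sum_congr rfl he]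
            have h4 := hsum' ⟨v, hv⟩
            rw [hfiltercong ⟨v, hv⟩] at h4
            exact h4
        · funext b'
          rw [hF]
          simp only []
          rw [hval_in b'.1 b'.2]
    have hres := ih (N - 1) (by omega) {b : B // b ∉ D} {u : V // u ≠ v₀} star' vert'
      hinv' hnf' hreg' hext' hconn' ⟨⟨u₀, hu₀ne⟩⟩ hbetti' hcV'
    rw [← Set.ncard_image_of_injOn hinj, himg]
    exact hres
  · -- base case : every vertex has exactly one external branch
    push_neg at hA
    have hk1 : ∀ v, k v = 1 := by
      by_contra hc
      push_neg at hc
      obtain ⟨v0, hv0⟩ := hc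
      have h0 : k v0 = 0 := by have := hA v0; omega
      have hlt : ∑ v : V, k v < ∑ _v : V, 1 := by
        apply Finset.sum_lt_sum (fun i _ => by have := hA i; omega)
        exact ⟨v0, Finset.mem_univ _, by omega⟩
      rw [Finset.sum_const, smul_eq_mul, mul_one, Finset.card_univ, hN] at hlt
      omega
    exact caseB hp2 star vert hinv hnf hreg hext hconn hV hbetti hk1

end Aux

/-- On a finite connected 3-regular semi-graph of Betti number 1 (possibly with
external edges) there are exactly `p - 1` strict `p`-branch numberings, and each
of them has value `1` on the vertex-side branch and `p - 1` on the free branch of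
every external edge. -/
theorem stmt_11 (p : ℕ) (hp : p.Prime) (hp2 : 2 < p)
    (B V : Type) [Fintype B] [Fintype V] [DecidableEq B] [DecidableEq V]
    (star : B → B) (vert : B → Option V)
    (hinv : ∀ b, star (star b) = b) (hnf : ∀ b, star b ≠ b)
    -- every vertex carries exactly three branches
    (hreg : ∀ v : V, (Finset.univ.filter (fun b => vert b = some v)).card = 3)
    -- external edges have exactly one free branch; free branches pair with
    -- vertex-side branches
    (hext : ∀ b, vert b = none → ∃ v, vert (star b) = some v)
    -- connectedness through internal edges
    (hconn : ∀ u v : V, Relation.ReflTransGen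
      (fun x y => ∃ b, vert b = some x ∧ vert (star b) = some y) u v)
    (hV : Nonempty V)
    -- Betti number 1 : #(internal edges) = #V, i.e. #B = 2 * #V + 2 * r where
    -- r is the number of free branches
    (hbetti : Fintype.card B =
      2 * Fintype.card V + 2 * (Finset.univ.filter (fun b => vert b = none)).card) :
    ({ m : B → ℕ |
        (∀ b, 1 ≤ m b) ∧ (∀ b, m b ≤ p - 1) ∧ (∀ b, m b + m (star b) = p) ∧
        (∀ v : V, ∑ b ∈ Finset.univ.filter (fun b => vert b = some v), m b = p + 1) }).ncard
      = p - 1 ∧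
    ∀ m : B → ℕ,
      ((∀ b, 1 ≤ m b) ∧ (∀ b, m b ≤ p - 1) ∧ (∀ b, m b + m (star b) = p) ∧
        (∀ v : V, ∑ b ∈ Finset.univ.filter (fun b => vert b = some v), m b = p + 1)) →
      ∀ b, vert b = none → m (star b) = 1 ∧ m b = p - 1 := by
  constructor
  · exact count_main p hp2 (Fintype.card V) B V star vert hinv hnf hreg hext hconn hV hbetti rfl
  · intro m hm b hb
    have h := part2_main hp2 star vert hinv hreg hbetti m hm.2.1 hm.2.2.1 hm.2.2.2 b hb
    exact ⟨h.2, h.1⟩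
end

section
/- Let p > 2 be a prime. For any a, b in {1,...,p-1} with a + b ≤ p, setting c = p + 1 - a - b (so a + b + c = p + 1 and c ≥ 1), the triple (a^μ, b^μ, c^μ) satisfies all three triangle inequalities: a^μ ≤ b^μ + c^μ, b^μ ≤ a^μ + c^μ, and c^μ ≤ a^μ + b^μ. -/
theorem stmt_15 (p : ℕ) (hp : p.Prime) (hp2 : 2 < p)
    (a b : ℕ) (ha1 : 1 ≤ a) (ha2 : a ≤ p - 1) (hb1 : 1 ≤ b) (hb2 : b ≤ p - 1)
    (hab : a + b ≤ p) (c : ℕ) (hc : c = p + 1 - a - b) :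
    mu p a ≤ mu p b + mu p c ∧
    mu p b ≤ mu p a + mu p c ∧
    mu p c ≤ mu p a + mu p b := by
  have hodd : p % 2 = 1 := by
    rcases Nat.Prime.eq_two_or_odd hp with h | h <;> omega
  subst hc
  unfold mu
  split_ifs <;> omega
end
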